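/- Let {f_θ}_{θ∈Θ} be a family of functions f_θ : ℝ^d → ℝ^k, F(w,V,θ) = (1/n)·Σ_{i=1}^n ℓ(wᵀ(x_i + V f_θ(x_i)); y_i) with ℓ(·;y) twice differentiable and convex, F_θ(w,V) := F(w,V,θ), and F_lin(u) = (1/n)·Σ_{i=1}^n ℓ(uᵀx_i; y_i). Suppose that on every bounded subset of the domain, for each fixed θ, the functions F_θ, ∇F_θ and ∇²F_θ are Lipschitz continuous in (w,V) (with constants that may depend on the subset but are uniform over θ with (w,V,θ) in the subset). Then every local minimum (w,V,θ) of F satisfies F(w,V,θ) ≤ inf_{u∈ℝ^d} F_lin(u). In particular, F has no spurious local minimum with value above the infimum attainable by linear predictors. -/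

import Mathlib

open scoped RealInnerProductSpace
open Finset

noncomputable section

/-- Euclidean column vectors in `ℝ^d`. -/
abbrev Vec (d : ℕ) : Type := EuclideanSpace ℝ (Fin d)

/-- The concatenated parameter vector `(w, vec(V))`. -/
abbrev Param (d k : ℕ) : Type := EuclideanSpace ℝ (Fin d ⊕ Fin d × Fin k)

/-- The residual-network objective `F(w,V) = (1/n)·Σᵢ ℓ(wᵀ(xᵢ + V f(xᵢ)); yᵢ)`. -/
def netObj {d k n : ℕ} (ℓ : ℝ → ℝ → ℝ) (f : Vec d → Vec k)
    (x : Fin n → Vec d) (y : Fin n → ℝ) (z : Param d k) : ℝ :=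
  (1 / (n : ℝ)) *
    ∑ i, ℓ (∑ j, z (Sum.inl j) * ((x i) j + ∑ l, z (Sum.inr (j, l)) * (f (x i)) l)) (y i)

/-- The linear-predictor objective `F_lin(u) = (1/n)·Σᵢ ℓ(uᵀxᵢ; yᵢ)`. -/
def linObj {d n : ℕ} (ℓ : ℝ → ℝ → ℝ) (x : Fin n → Vec d) (y : Fin n → ℝ) (u : Vec d) : ℝ :=
  (1 / (n : ℝ)) * ∑ i, ℓ (∑ j, u j * (x i) j) (y i)

/-- Spectral norm of a matrix. -/
def matSpectralNorm {ι κ : Type} [Fintype ι] [Fintype κ] [DecidableEq κ] (V : Matrix ι κ ℝ) : ℝ :=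
  ‖LinearMap.toContinuousLinearMap (Matrix.toEuclideanLin V)‖

/-- The Hessian matrix of second partial derivatives of `F`. -/
def hessianMatrix {ι : Type} [Fintype ι] [DecidableEq ι] (F : EuclideanSpace ℝ ι → ℝ)
    (z : EuclideanSpace ℝ ι) : Matrix ι ι ℝ :=
  Matrix.of fun p q =>
    fderiv ℝ (fun v => fderiv ℝ F v (EuclideanSpace.single q 1)) z (EuclideanSpace.single p 1)

/-! The objective factors through the predictions: `F_θ(w, V) = R(p)` with
`pᵢ = wᵀxᵢ + (wᵀV) f_θ(xᵢ)`, and `R(p) = (1/n)·Σᵢ ℓ(pᵢ; yᵢ)` is convex. If some `w_{j₀} ≠ 0`, the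
parameters can follow a path through `(w, V)` whose predictions run along the segment from `p` to
the linear predictions `uᵀxᵢ`: move `w` linearly to `u` and correct row `j₀` of `V` so that `wᵀV`
only shrinks by the factor `1 - t`. A local minimum of a convex function along a segment is a
minimum on it, so `R(p) ≤ F_lin(u)`. If `w = 0`, stationarity in `w` in the direction `u` at
`(0, cV)` for all `c` near `1` shows that the directional derivative of `R` at `0` along `uᵀxᵢ`
vanishes, and the tangent-line inequality for the convex `R` concludes. -/

section

open Matrix Filter Topology

variable {d k n : ℕ}

def empiricalRisk (ℓ : ℝ → ℝ → ℝ) (y : Fin n → ℝ) (p : Fin n → ℝ) : ℝ :=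
  (1 / (n : ℝ)) * ∑ i, ℓ (p i) (y i)

lemma convexOn_empiricalRisk {ℓ : ℝ → ℝ → ℝ}
    (hconv : ∀ y₀ : ℝ, ConvexOn ℝ Set.univ fun p => ℓ p y₀) (y : Fin n → ℝ) :
    ConvexOn ℝ Set.univ (empiricalRisk ℓ y) := by
  have hsum : ConvexOn ℝ Set.univ (∑ i, fun p : Fin n → ℝ => ℓ (p i) (y i)) :=
    Finset.sum_induction _ (ConvexOn ℝ Set.univ) (fun _ _ => ConvexOn.add)
      (convexOn_const 0 convex_univ) fun i _ => by
        simpa [Function.comp_def] using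
          (hconv (y i)).comp_linearMap (LinearMap.proj (R := ℝ) (φ := fun _ : Fin n => ℝ) i)
  unfold empiricalRisk
  simpa only [Finset.sum_apply, smul_eq_mul] using hsum.smul (by positivity : (0 : ℝ) ≤ 1 / n)

lemma hasDerivAt_empiricalRisk_smul {ℓ : ℝ → ℝ → ℝ}
    (hdiff : ∀ y₀ : ℝ, Differentiable ℝ fun p => ℓ p y₀) (y A : Fin n → ℝ) (t : ℝ) :
    HasDerivAt (fun s : ℝ => empiricalRisk ℓ y (s • A))
      ((1 / (n : ℝ)) * ((fun i => deriv (fun p => ℓ p (y i)) (t * A i)) ⬝ᵥ A)) t := by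
  refine .const_mul _ (.fun_sum fun i _ => ?_)
  simpa [Function.comp_def] using
    ((hdiff (y i)) (t * A i)).hasDerivAt.comp t ((hasDerivAt_id t).mul_const (A i))

lemma ConvexOn.le_of_isLocalMin_lineMap {E : Type*} [AddCommGroup E] [Module ℝ E] {L : E → ℝ}
    (hL : ConvexOn ℝ Set.univ L) {P Q : E}
    (h : IsLocalMin (fun t : ℝ => L (AffineMap.lineMap P Q t)) 0) : L P ≤ L Q := by
  simpa using IsMinOn.of_isLocalMin_of_convex_univ h (hL.comp_affineMap _) 1

lemma ConvexOn.add_le_of_hasDerivAt_lineMap {E : Type*} [AddCommGroup E] [Module ℝ E]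
    {L : E → ℝ} (hL : ConvexOn ℝ Set.univ L) {P Q : E} {D : ℝ}
    (h : HasDerivAt (fun t : ℝ => L (AffineMap.lineMap P Q t)) D 0) : L P + D ≤ L Q := by
  have := (hL.comp_affineMap (AffineMap.lineMap P Q)).le_slope_of_hasDerivAt trivial trivial
    zero_lt_one h
  simp only [slope_def_field, Function.comp_apply, AffineMap.lineMap_apply_one,
    AffineMap.lineMap_apply_zero, sub_zero, div_one] at this
  linarith

lemma eq_zero_of_eventually_add_mul_eq_zero {a b c₀ : ℝ} (h : ∀ᶠ c in 𝓝 c₀, a + c * b = 0) :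
    a = 0 ∧ b = 0 := by
  have hb : b = 0 := by
    have hderiv : HasDerivAt (fun c => a + c * b) b c₀ := by
      simpa using ((hasDerivAt_id c₀).mul_const b).const_add a
    exact (hderiv.congr_of_eventuallyEq (h.mono fun c hc => hc.symm)).unique
      (hasDerivAt_const c₀ 0)
  simpa [hb] using h.self_of_nhds

lemma Matrix.vecMul_add_div_smul_vecMulVec_single {m o R : Type*} [Field R] [Fintype m]
    [DecidableEq m] {w : m → R} {j : m} (hw : w j ≠ 0) (V : Matrix m o R) (c : R) (r : o → R) :
    w ᵥ* (V + (c / w j) • vecMulVec (Pi.single j 1) r) = w ᵥ* V + c • r := by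
  rw [vecMul_add, vecMul_smul, vecMul_vecMulVec, dotProduct_single, mul_one, smul_smul,
    div_mul_cancel₀ c hw]

def Param.mk (w : Fin d → ℝ) (V : Matrix (Fin d) (Fin k) ℝ) : Param d k :=
  WithLp.toLp 2 (Sum.elim w fun p => V p.1 p.2)

lemma Param.exists_eq_mk (z : Param d k) : ∃ w V, z = Param.mk w V :=
  ⟨fun j => z (.inl j), .of fun j l => z (.inr (j, l)), by ext (j | ⟨j, l⟩) <;> rfl⟩

lemma Param.continuous_mk :
    Continuous fun p : (Fin d → ℝ) × Matrix (Fin d) (Fin k) ℝ => Param.mk p.1 p.2 := by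
  refine (PiLp.continuous_toLp 2 _).comp (continuous_pi fun i => ?_)
  rcases i with j | ⟨j, l⟩
  · exact (continuous_apply j).comp continuous_fst
  · exact (continuous_apply_apply j l).comp continuous_snd

lemma netObj_mk (ℓ : ℝ → ℝ → ℝ) (φ : Vec d → Vec k) (x : Fin n → Vec d) (y : Fin n → ℝ)
    (w : Fin d → ℝ) (V : Matrix (Fin d) (Fin k) ℝ) :
    netObj ℓ φ x y (Param.mk w V) =
      empiricalRisk ℓ y fun i => w ⬝ᵥ (x i).ofLp + (w ᵥ* V) ⬝ᵥ (φ (x i)).ofLp := by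
  simp only [← dotProduct_mulVec, ← dotProduct_add]
  rfl

lemma linObj_eq_empiricalRisk (ℓ : ℝ → ℝ → ℝ) (x : Fin n → Vec d) (y : Fin n → ℝ)
    (u : Vec d) : linObj ℓ x y u = empiricalRisk ℓ y fun i => u.ofLp ⬝ᵥ (x i).ofLp :=
  rfl

variable {ℓ : ℝ → ℝ → ℝ} {x : Fin n → Vec d} {y : Fin n → ℝ} {φ : Vec d → Vec k}
  {V : Matrix (Fin d) (Fin k) ℝ}

lemma netObj_le_linObj_of_isLocalMin_of_ne_zero
    (hconv : ∀ y₀ : ℝ, ConvexOn ℝ Set.univ fun p => ℓ p y₀) {w : Fin d → ℝ}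
    (hmin : IsLocalMin (netObj ℓ φ x y) (Param.mk w V)) {j₀ : Fin d} (hj₀ : w j₀ ≠ 0)
    (u : Vec d) : netObj ℓ φ x y (Param.mk w V) ≤ linObj ℓ x y u := by
  set wt : ℝ → Fin d → ℝ := fun t => AffineMap.lineMap w u.ofLp t
  set M := vecMulVec (Pi.single j₀ 1) (u.ofLp ᵥ* V)
  -- the correction `(-t / wt t j₀) • M` cancels the `t • (uᵀV)` that moving `w` adds to `wᵀV`
  set γ : ℝ → Param d k := fun t => Param.mk (wt t) (V + (-t / wt t j₀) • M)
  have hwt : ∀ᶠ t in 𝓝 0, wt t j₀ ≠ 0 :=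
    ContinuousAt.eventually_ne (by fun_prop) (by simpa [wt] using hj₀)
  have hγ : ContinuousAt γ 0 :=
    Param.continuous_mk.continuousAt.comp (f := fun t => (wt t, V + (-t / wt t j₀) • M))
      (.prodMk (by fun_prop) (by fun_prop (disch := simpa [wt] using hj₀)))
  have hγ₀ : γ 0 = Param.mk w V := by simp [γ, wt]
  rw [netObj_mk, linObj_eq_empiricalRisk]
  refine (convexOn_empiricalRisk hconv y).le_of_isLocalMin_lineMap ?_
  refine (hγ₀ ▸ hmin).comp_continuous hγ |>.congr ?_
  filter_upwards [hwt] with t ht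
  simp only [Function.comp_apply, γ, M, netObj_mk, vecMul_add_div_smul_vecMulVec_single ht]
  congr 1
  ext i
  simp only [wt, AffineMap.lineMap_apply_module, add_dotProduct, smul_dotProduct, smul_eq_mul,
    add_vecMul, smul_vecMul, neg_smul, add_neg_cancel_right, Pi.add_apply, Pi.smul_apply]
  ring

lemma netObj_le_linObj_of_isLocalMin_zero
    (hconv : ∀ y₀ : ℝ, ConvexOn ℝ Set.univ fun p => ℓ p y₀)
    (hdiff : ∀ y₀ : ℝ, Differentiable ℝ fun p => ℓ p y₀)
    (hmin : IsLocalMin (netObj ℓ φ x y) (Param.mk 0 V)) (u : Vec d) :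
    netObj ℓ φ x y (Param.mk 0 V) ≤ linObj ℓ x y u := by
  set Q : Fin n → ℝ := fun i => u.ofLp ⬝ᵥ (x i).ofLp
  set R : Fin n → ℝ := fun i => (u.ofLp ᵥ* V) ⬝ᵥ (φ (x i)).ofLp
  set D : Fin n → ℝ := fun i => deriv (fun p => ℓ p (y i)) 0
  have hobj : ∀ c ε : ℝ,
      netObj ℓ φ x y (Param.mk (ε • u.ofLp) (c • V)) = empiricalRisk ℓ y (ε • (Q + c • R)) := by
    intro c ε
    rw [netObj_mk]
    congr 1
    ext i
    simp only [Q, R, smul_dotProduct, smul_vecMul, vecMul_smul, smul_eq_mul, Pi.smul_apply,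
      Pi.add_apply]
    ring
  have hobj₀ : netObj ℓ φ x y (Param.mk 0 V) = empiricalRisk ℓ y 0 := by simpa using hobj 1 0
  have hstationary :
      ∀ᶠ c in 𝓝 (1 : ℝ), (1 / n : ℝ) * (D ⬝ᵥ Q) + c * ((1 / n : ℝ) * (D ⬝ᵥ R)) = 0 := by
    set g : ℝ × ℝ → Param d k := fun p => Param.mk (p.2 • u.ofLp) (p.1 • V)
    have hg : ContinuousAt g (1, 0) :=
      Param.continuous_mk.continuousAt.comp (f := fun p : ℝ × ℝ => (p.2 • u.ofLp, p.1 • V))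
        (by fun_prop)
    have hg₀ : g (1, 0) = Param.mk 0 V := by simp [g]
    rw [← hg₀] at hmin
    have hloc : ∀ᶠ p in 𝓝 ((1 : ℝ), (0 : ℝ)),
        netObj ℓ φ x y (g (1, 0)) ≤ netObj ℓ φ x y (g p) :=
      hmin.comp_continuous hg
    filter_upwards [hloc.curry_nhds] with c hc
    have hmin_c : IsLocalMin (fun ε : ℝ => empiricalRisk ℓ y (ε • (Q + c • R))) 0 := by
      filter_upwards [hc] with ε hε
      simpa [g, hobj, hobj₀] using hε
    have hderiv := hmin_c.hasDerivAt_eq_zero (hasDerivAt_empiricalRisk_smul hdiff y _ 0)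
    simp only [zero_mul, dotProduct_add, dotProduct_smul, smul_eq_mul] at hderiv
    linear_combination hderiv
  have hQ := (eq_zero_of_eventually_add_mul_eq_zero hstationary).1
  have htangent := (convexOn_empiricalRisk hconv y).add_le_of_hasDerivAt_lineMap
    (P := 0) (Q := Q) (D := (1 / n : ℝ) * (D ⬝ᵥ Q))
    (by simpa [AffineMap.lineMap_apply_module, D] using hasDerivAt_empiricalRisk_smul hdiff y Q 0)
  rwa [hQ, add_zero, ← hobj₀] at htangent

end

theorem local_min_le_linear_general
    {d k n : ℕ} (ℓ : ℝ → ℝ → ℝ) (x : Fin n → Vec d) (y : Fin n → ℝ)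
    (hconv : ∀ y₀ : ℝ, ConvexOn ℝ Set.univ fun p => ℓ p y₀)
    (hdiff : ∀ y₀ : ℝ, Differentiable ℝ fun p => ℓ p y₀)
    {Θ : Type*} [MetricSpace Θ] (f : Θ → Vec d → Vec k)
    (z : Param d k) (θ : Θ)
    (hmin : IsLocalMin (fun p : Param d k × Θ => netObj ℓ (f p.2) x y p.1) (z, θ)) :
    ∀ u : Vec d, netObj ℓ (f θ) x y z ≤ linObj ℓ x y u := by
  have hminθ : IsLocalMin (netObj ℓ (f θ) x y) z :=
    hmin.comp_continuous (g := fun z' => (z', θ)) (by fun_prop)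
  obtain ⟨w, V, rfl⟩ := Param.exists_eq_mk z
  by_cases hw : w = 0
  · subst hw
    exact netObj_le_linObj_of_isLocalMin_zero hconv hdiff hminθ
  · obtain ⟨j₀, hj₀⟩ := Function.ne_iff.mp hw
    exact netObj_le_linObj_of_isLocalMin_of_ne_zero hconv hminθ hj₀

/-- Corollary 1 of the paper: every local minimum of `F` is at least as
good as every linear predictor. -/
theorem local_min_le_linear
    {d k n : ℕ} (ℓ : ℝ → ℝ → ℝ) (x : Fin n → Vec d) (y : Fin n → ℝ)
    (hconv : ∀ y₀ : ℝ, ConvexOn ℝ Set.univ fun p => ℓ p y₀)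
    (hdiff : ∀ y₀ : ℝ, Differentiable ℝ fun p => ℓ p y₀)
    (hdiff2 : ∀ y₀ : ℝ, Differentiable ℝ (deriv fun p => ℓ p y₀))
    {Θ : Type*} [MetricSpace Θ] (f : Θ → Vec d → Vec k)
    (hlip : ∀ S : Set (Param d k × Θ), Bornology.IsBounded S →
      ∃ μ₀ μ₁ μ₂ : ℝ, ∀ θ z z', (z, θ) ∈ S → (z', θ) ∈ S →
        |netObj ℓ (f θ) x y z - netObj ℓ (f θ) x y z'| ≤ μ₀ * ‖z - z'‖ ∧
        ‖gradient (netObj ℓ (f θ) x y) z - gradient (netObj ℓ (f θ) x y) z'‖ ≤ μ₁ * ‖z - z'‖ ∧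
        matSpectralNorm (hessianMatrix (netObj ℓ (f θ) x y) z -
            hessianMatrix (netObj ℓ (f θ) x y) z') ≤ μ₂ * ‖z - z'‖)
    (z : Param d k) (θ : Θ)
    (hmin : IsLocalMin (fun p : Param d k × Θ => netObj ℓ (f p.2) x y p.1) (z, θ)) :
    ∀ u : Vec d, netObj ℓ (f θ) x y z ≤ linObj ℓ x y u :=
  local_min_le_linear_general ℓ x y hconv hdiff f z θ hmin

end
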